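/- Let ξ > 0 be real, θ ∈ [−π/4, 0], r ≥ 0, β = r·e^{iθ}, and define D(ξ, β) := min{ 2|β|, √2·|ξ − β|, √2·|ξ + β|, √2·|ξ − iβ|, √2·|ξ + iβ|, 2ξ }. Set β₁(θ) = ξ·(−cos θ + √(1 + cos²θ)) and β₂(θ) = ξ·(cos θ + √(1 + cos²θ)). Then: (a) if 0 ≤ r ≤ β₁(θ) then D(ξ, β) = 2r; (b) if β₁(θ) ≤ r ≤ β₂(θ) then D(ξ, β) = √2·|ξ − β|; (c) if r ≥ β₂(θ) then D(ξ, β) = 2ξ. -/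

import Mathlib

/-!
Write `β = r e^{iθ}`. Since `|θ| ≤ π/4`, `β` lies in the cone `|Im β| ≤ Re β`, and among the
points `β, -β, iβ, -iβ` of equal modulus `β` has the largest real part, hence is the closest
to `ξ > 0`. So `D(ξ, β) = min (2r, √2 |ξ - β|, 2ξ)`, with
`2 |ξ - β|² = 2 (ξ² - 2ξr cos θ + r²)`. Comparing squares, `2r` against `√2 |ξ - β|` is decided
by the sign of `r² + 2ξr cos θ - ξ²`, and `2ξ` against `√2 |ξ - β|` by that of
`r² - 2ξr cos θ - ξ²`; their positive roots are `β₁` and `β₂`.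
-/

open Real Complex

/-- The minimum pairwise Euclidean distance of the 8-point composite constellation. -/
noncomputable def Dmin (ξ : ℝ) (β : ℂ) : ℝ :=
  min (min (min (2 * ‖β‖) (Real.sqrt 2 * ‖(ξ : ℂ) - β‖))
        (min (Real.sqrt 2 * ‖(ξ : ℂ) + β‖)
          (Real.sqrt 2 * ‖(ξ : ℂ) - Complex.I * β‖)))
      (min (Real.sqrt 2 * ‖(ξ : ℂ) + Complex.I * β‖) (2 * ξ))

lemma Real.abs_sin_le_cos {θ : ℝ} (hθ : |θ| ≤ π / 4) : |Real.sin θ| ≤ Real.cos θ := by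
  obtain ⟨hθ₁, hθ₂⟩ := abs_le.mp hθ
  have hcos : 0 ≤ Real.cos θ :=
    Real.cos_nonneg_of_neg_pi_div_two_le_of_le (by linarith) (by linarith)
  have hcos2 : 0 ≤ Real.cos (2 * θ) :=
    Real.cos_nonneg_of_neg_pi_div_two_le_of_le (by linarith) (by linarith)
  refine abs_le_of_sq_le_sq ?_ hcos
  rw [Real.cos_two_mul] at hcos2
  linarith [Real.sin_sq θ]

lemma Complex.sq_norm_ofReal_sub (x : ℝ) (z : ℂ) :
    ‖(x : ℂ) - z‖ ^ 2 = x ^ 2 - 2 * x * z.re + ‖z‖ ^ 2 := by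
  simp only [Complex.sq_norm, Complex.normSq_apply, Complex.sub_re, Complex.sub_im,
    Complex.ofReal_re, Complex.ofReal_im]
  ring

lemma Complex.norm_ofReal_sub_le_of_re_le {x : ℝ} (hx : 0 ≤ x) {z w : ℂ} (hzw : ‖z‖ = ‖w‖)
    (hre : w.re ≤ z.re) : ‖(x : ℂ) - z‖ ≤ ‖(x : ℂ) - w‖ := by
  rw [← sq_le_sq₀ (norm_nonneg _) (norm_nonneg _), Complex.sq_norm_ofReal_sub,
    Complex.sq_norm_ofReal_sub, hzw]
  nlinarith

lemma Dmin_eq_min_of_abs_im_le_re {ξ : ℝ} (hξ : 0 ≤ ξ) {β : ℂ} (hβ : |β.im| ≤ β.re) :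
    Dmin ξ β = min (min (2 * ‖β‖) (√2 * ‖(ξ : ℂ) - β‖)) (2 * ξ) := by
  obtain ⟨him₁, him₂⟩ := abs_le.mp hβ
  have hI : ‖Complex.I * β‖ = ‖β‖ := by rw [norm_mul, Complex.norm_I, one_mul]
  have closer (w : ℂ) (hw : ‖β‖ = ‖w‖) (hre : w.re ≤ β.re) :
      √2 * ‖(ξ : ℂ) - β‖ ≤ √2 * ‖(ξ : ℂ) - w‖ :=
    mul_le_mul_of_nonneg_left (Complex.norm_ofReal_sub_le_of_re_le hξ hw hre) (by positivity)
  have hadd := closer (-β) (norm_neg β).symm (by rw [Complex.neg_re]; linarith)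
  have hIsub := closer (Complex.I * β) hI.symm (by rw [Complex.I_mul_re]; linarith)
  have hIadd := closer (-(Complex.I * β)) (by rw [norm_neg, hI])
    (by rw [Complex.neg_re, Complex.I_mul_re]; linarith)
  simp only [sub_neg_eq_add] at hadd hIadd
  unfold Dmin
  rw [min_eq_left (le_min (min_le_of_right_le hadd) (min_le_of_right_le hIsub)), min_left_comm,
    min_eq_right (min_le_of_left_le (min_le_of_right_le hIadd))]

lemma sq_add_two_mul_mul_sub_sq_eq (x c r : ℝ) :
    r ^ 2 + 2 * x * c * r - x ^ 2 =
      (r - x * (-c + √(1 + c ^ 2))) * (r + x * (c + √(1 + c ^ 2))) := by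
  linear_combination x ^ 2 * Real.sq_sqrt (by positivity : (0 : ℝ) ≤ 1 + c ^ 2)

lemma add_sqrt_one_add_sq_pos (c : ℝ) : 0 < c + √(1 + c ^ 2) := by
  have : |c| < √(1 + c ^ 2) := by
    rw [← Real.sqrt_sq_eq_abs]
    exact Real.sqrt_lt_sqrt (sq_nonneg c) (lt_one_add _)
  linarith [neg_abs_le c]

lemma sq_add_two_mul_mul_sub_sq_nonpos_iff {x r : ℝ} (c : ℝ) (hx : 0 < x) (hr : 0 ≤ r) :
    r ^ 2 + 2 * x * c * r - x ^ 2 ≤ 0 ↔ r ≤ x * (-c + √(1 + c ^ 2)) := by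
  have hpos : 0 < r + x * (c + √(1 + c ^ 2)) := by
    nlinarith [mul_pos hx (add_sqrt_one_add_sq_pos c)]
  rw [sq_add_two_mul_mul_sub_sq_eq, ← neg_nonneg, ← neg_mul, mul_nonneg_iff_of_pos_right hpos,
    neg_nonneg, sub_nonpos]

lemma sq_add_two_mul_mul_sub_sq_nonneg_iff {x r : ℝ} (c : ℝ) (hx : 0 < x) (hr : 0 ≤ r) :
    0 ≤ r ^ 2 + 2 * x * c * r - x ^ 2 ↔ x * (-c + √(1 + c ^ 2)) ≤ r := by
  have hpos : 0 < r + x * (c + √(1 + c ^ 2)) := by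
    nlinarith [mul_pos hx (add_sqrt_one_add_sq_pos c)]
  rw [sq_add_two_mul_mul_sub_sq_eq, mul_nonneg_iff_of_pos_right hpos, sub_nonneg]

lemma sq_sqrt_two_mul_norm_ofReal_sub (x : ℝ) (z : ℂ) :
    (√2 * ‖(x : ℂ) - z‖) ^ 2 = 2 * (x ^ 2 - 2 * x * z.re + ‖z‖ ^ 2) := by
  rw [mul_pow, Real.sq_sqrt zero_le_two, Complex.sq_norm_ofReal_sub]

section Thresholds

variable {x r c : ℝ} {z : ℂ}

lemma two_mul_norm_le_sqrt_two_mul_norm_ofReal_sub_iff (hx : 0 < x) (hr : 0 ≤ r)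
    (hz : ‖z‖ = r) (hre : z.re = r * c) :
    2 * r ≤ √2 * ‖(x : ℂ) - z‖ ↔ r ≤ x * (-c + √(1 + c ^ 2)) := by
  rw [← sq_le_sq₀ (by positivity) (by positivity), sq_sqrt_two_mul_norm_ofReal_sub, hz, hre,
    ← sq_add_two_mul_mul_sub_sq_nonpos_iff c hx hr]
  constructor <;> intro h <;> linarith

lemma sqrt_two_mul_norm_ofReal_sub_le_two_mul_norm_iff (hx : 0 < x) (hr : 0 ≤ r)
    (hz : ‖z‖ = r) (hre : z.re = r * c) :
    √2 * ‖(x : ℂ) - z‖ ≤ 2 * r ↔ x * (-c + √(1 + c ^ 2)) ≤ r := by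
  rw [← sq_le_sq₀ (by positivity) (by positivity), sq_sqrt_two_mul_norm_ofReal_sub, hz, hre,
    ← sq_add_two_mul_mul_sub_sq_nonneg_iff c hx hr]
  constructor <;> intro h <;> linarith

lemma sqrt_two_mul_norm_ofReal_sub_le_two_mul_iff (hx : 0 < x) (hr : 0 ≤ r)
    (hz : ‖z‖ = r) (hre : z.re = r * c) :
    √2 * ‖(x : ℂ) - z‖ ≤ 2 * x ↔ r ≤ x * (c + √(1 + c ^ 2)) := by
  have key := sq_add_two_mul_mul_sub_sq_nonpos_iff (-c) hx hr
  rw [neg_neg, neg_sq] at key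
  rw [← sq_le_sq₀ (by positivity) (by positivity), sq_sqrt_two_mul_norm_ofReal_sub, hz, hre, ← key]
  constructor <;> intro h <;> linarith

lemma two_mul_le_sqrt_two_mul_norm_ofReal_sub_iff (hx : 0 < x) (hr : 0 ≤ r)
    (hz : ‖z‖ = r) (hre : z.re = r * c) :
    2 * x ≤ √2 * ‖(x : ℂ) - z‖ ↔ x * (c + √(1 + c ^ 2)) ≤ r := by
  have key := sq_add_two_mul_mul_sub_sq_nonneg_iff (-c) hx hr
  rw [neg_neg, neg_sq] at key
  rw [← sq_le_sq₀ (by positivity) (by positivity), sq_sqrt_two_mul_norm_ofReal_sub, hz, hre, ← key]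
  constructor <;> intro h <;> linarith

end Thresholds

theorem stmt_9 (ξ θ r : ℝ) (hξ : 0 < ξ) (hθ : θ ∈ Set.Icc (-(π / 4)) 0) (hr : 0 ≤ r)
    (β : ℂ) (hβ : β = (r : ℂ) * Complex.exp ((θ : ℂ) * Complex.I)) :
    (r ≤ ξ * (-Real.cos θ + Real.sqrt (1 + Real.cos θ ^ 2)) → Dmin ξ β = 2 * r) ∧
    (ξ * (-Real.cos θ + Real.sqrt (1 + Real.cos θ ^ 2)) ≤ r ∧
        r ≤ ξ * (Real.cos θ + Real.sqrt (1 + Real.cos θ ^ 2)) →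
      Dmin ξ β = Real.sqrt 2 * ‖(ξ : ℂ) - β‖) ∧
    (ξ * (Real.cos θ + Real.sqrt (1 + Real.cos θ ^ 2)) ≤ r → Dmin ξ β = 2 * ξ) := by
  have hsc : |Real.sin θ| ≤ Real.cos θ :=
    Real.abs_sin_le_cos (abs_le.mpr ⟨hθ.1, hθ.2.trans (by positivity)⟩)
  have hnorm : ‖β‖ = r := by
    rw [hβ, norm_mul, Complex.norm_exp_ofReal_mul_I, mul_one, Complex.norm_real,
      Real.norm_of_nonneg hr]
  have hre : β.re = r * Real.cos θ := by
    rw [hβ, Complex.re_ofReal_mul, Complex.exp_ofReal_mul_I_re]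
  have him : β.im = r * Real.sin θ := by
    rw [hβ, Complex.im_ofReal_mul, Complex.exp_ofReal_mul_I_im]
  have hcone : |β.im| ≤ β.re := by
    rw [hre, him, abs_mul, abs_of_nonneg hr]
    exact mul_le_mul_of_nonneg_left hsc hr
  have hβ₁_le_β₂ : ξ * (-Real.cos θ + √(1 + Real.cos θ ^ 2)) ≤
      ξ * (Real.cos θ + √(1 + Real.cos θ ^ 2)) :=
    mul_le_mul_of_nonneg_left (by linarith [(abs_nonneg _).trans hsc]) hξ.le
  have hr_le_d := two_mul_norm_le_sqrt_two_mul_norm_ofReal_sub_iff hξ hr hnorm hre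
  have hd_le_r := sqrt_two_mul_norm_ofReal_sub_le_two_mul_norm_iff hξ hr hnorm hre
  have hd_le_ξ := sqrt_two_mul_norm_ofReal_sub_le_two_mul_iff hξ hr hnorm hre
  have hξ_le_d := two_mul_le_sqrt_two_mul_norm_ofReal_sub_iff hξ hr hnorm hre
  rw [Dmin_eq_min_of_abs_im_le_re hξ.le hcone, hnorm]
  refine ⟨fun h => ?_, fun ⟨h₁, h₂⟩ => ?_, fun h => ?_⟩
  · have hd := hr_le_d.2 h
    rw [min_eq_left hd, min_eq_left (hd.trans (hd_le_ξ.2 (h.trans hβ₁_le_β₂)))]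
  · rw [min_eq_right (hd_le_r.2 h₁), min_eq_left (hd_le_ξ.2 h₂)]
  · rw [min_eq_right (hd_le_r.2 (hβ₁_le_β₂.trans h)), min_eq_right (hξ_le_d.2 h)]
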